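/- Let m, q, p be positive real numbers with m < q, let f : ℝ → ℝ be differentiable, and suppose there is a constant K > 0 with |f(t)| + |f′(t)| ≤ K for all t ∈ ℝ. Then | Σ_{ℓ ∈ ℤ, m < ℓ < q, ℓ even} f(ℓ/p) − (p/2) ∫_{m/p}^{q/p} f(t) dt | ≤ K(q−m)/p + 2K, and likewise | Σ_{ℓ ∈ ℤ, m < ℓ < q, ℓ odd} f(ℓ/p) − (p/2) ∫_{m/p}^{q/p} f(t) dt | ≤ K(q−m)/p + 2K. -/

import Mathlib

/-!
Each sample point `ℓ / p` is the midpoint of the cell `[(ℓ - 1) / p, (ℓ + 1) / p]`, and for `ℓ` of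
a fixed parity these cells tile an interval whose ends lie within `1 / p` of `m / p` and `q / p`.
As `f` is `K`-Lipschitz, `(2 / p) f (ℓ / p)` differs from the integral over its cell by at most
`2K / p²`, and each of the two boundary pieces has integral at most `K / p`. After scaling by
`p / 2`, the `n ≤ (q - m) / 2 + 1` terms give the bound `n K / p + K`, which suffices for `p > 1`;
for `p ≤ 1` the trivial bound `n K + K (q - m) / 2` suffices.
-/

open Finset MeasureTheory intervalIntegral
open scoped NNReal

section Midpoint

variable {E : Type*} [NormedAddCommGroup E] [NormedSpace ℝ E] {f : ℝ → E} {K : ℝ≥0}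

theorem norm_integral_sub_integral_le {C : ℝ} (hf : Continuous f) (hC : ∀ t, ‖f t‖ ≤ C)
    (a b c d : ℝ) :
    ‖(∫ t in a..b, f t) - ∫ t in c..d, f t‖ ≤ C * (|c - a| + |d - b|) := by
  rw [integral_interval_sub_interval_comm (hf.intervalIntegrable _ _)
    (hf.intervalIntegrable _ _) (hf.intervalIntegrable _ _), mul_add]
  exact (norm_sub_le _ _).trans (add_le_add (norm_integral_le_of_norm_le_const fun t _ => hC t)
    (norm_integral_le_of_norm_le_const fun t _ => hC t))

variable [CompleteSpace E]

theorem LipschitzWith.norm_integral_sub_midpoint_le (hf : LipschitzWith K f) (c : ℝ) {h : ℝ}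
    (hh : 0 ≤ h) : ‖(∫ t in c - h..c + h, f t) - (2 * h) • f c‖ ≤ 2 * K * h ^ 2 := by
  have hsub : (∫ t in c - h..c + h, f t) - (2 * h) • f c = ∫ t in c - h..c + h, (f t - f c) := by
    rw [integral_sub (hf.continuous.intervalIntegrable _ _) intervalIntegrable_const,
      intervalIntegral.integral_const]
    ring_nf
  have hclose : ∀ t ∈ Set.uIoc (c - h) (c + h), ‖f t - f c‖ ≤ K * h := fun t ht => by
    rw [Set.uIoc_of_le (by linarith)] at ht
    calc ‖f t - f c‖ ≤ K * ‖t - c‖ := hf.norm_sub_le t c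
      _ ≤ K * h := by
        gcongr
        rw [Real.norm_eq_abs, abs_le]
        constructor <;> linarith [ht.1, ht.2]
  calc ‖(∫ t in c - h..c + h, f t) - (2 * h) • f c‖ ≤ K * h * |c + h - (c - h)| := by
        rw [hsub]; exact norm_integral_le_of_norm_le_const hclose
    _ = 2 * K * h ^ 2 := by
        rw [show c + h - (c - h) = 2 * h by ring, abs_of_nonneg (by linarith)]; ring

theorem LipschitzWith.norm_integral_sub_midpoint_sum_le (hf : LipschitzWith K f) (x : ℝ) {h : ℝ}
    (hh : 0 ≤ h) (n : ℕ) :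
    ‖(∫ t in x..x + 2 * n * h, f t) - ∑ k ∈ range n, (2 * h) • f (x + (2 * k + 1) * h)‖
      ≤ 2 * n * K * h ^ 2 := by
  have hcells : (∫ t in x..x + 2 * n * h, f t)
      = ∑ k ∈ range n, ∫ t in (x + (2 * k + 1) * h) - h..(x + (2 * k + 1) * h) + h, f t := by
    have := sum_integral_adjacent_intervals (a := fun k : ℕ => x + 2 * k * h) (n := n)
      (fun k _ => hf.continuous.intervalIntegrable (μ := volume) _ _)
    simp only [Nat.cast_zero, mul_zero, zero_mul, add_zero, Nat.cast_succ] at this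
    rw [← this]
    exact sum_congr rfl fun k _ => by ring_nf
  calc ‖(∫ t in x..x + 2 * n * h, f t) - ∑ k ∈ range n, (2 * h) • f (x + (2 * k + 1) * h)‖
      ≤ ∑ k ∈ range n, ‖(∫ t in (x + (2 * k + 1) * h) - h..(x + (2 * k + 1) * h) + h, f t)
          - (2 * h) • f (x + (2 * k + 1) * h)‖ := by
        rw [hcells, ← sum_sub_distrib]; exact norm_sum_le _ _
    _ ≤ ∑ _k ∈ range n, 2 * K * h ^ 2 :=
        sum_le_sum fun k _ => hf.norm_integral_sub_midpoint_le _ hh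
    _ = 2 * n * K * h ^ 2 := by rw [sum_const, card_range, nsmul_eq_mul]; ring

theorem LipschitzWith.norm_integral_sub_midpoint_sum_le_of_abs_le (hf : LipschitzWith K f)
    {C : ℝ} (hC : ∀ t, ‖f t‖ ≤ C) {x h u v : ℝ} (hh : 0 ≤ h) (n : ℕ) (hu : |x - u| ≤ h)
    (hv : |x + 2 * n * h - v| ≤ h) :
    ‖(∫ t in u..v, f t) - ∑ k ∈ range n, (2 * h) • f (x + (2 * k + 1) * h)‖
      ≤ 2 * n * K * h ^ 2 + 2 * C * h := by
  have hC0 : 0 ≤ C := (norm_nonneg _).trans (hC 0)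
  have hends := norm_integral_sub_integral_le hf.continuous hC u v x (x + 2 * n * h)
  calc _ = ‖((∫ t in u..v, f t) - ∫ t in x..x + 2 * n * h, f t)
          + ((∫ t in x..x + 2 * n * h, f t)
            - ∑ k ∈ range n, (2 * h) • f (x + (2 * k + 1) * h))‖ := by rw [sub_add_sub_cancel]
    _ ≤ C * (h + h) + 2 * n * K * h ^ 2 := by
        refine (norm_add_le _ _).trans (add_le_add ?_ (hf.norm_integral_sub_midpoint_sum_le x hh n))
        exact hends.trans (by gcongr)
    _ = 2 * n * K * h ^ 2 + 2 * C * h := by ring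

end Midpoint

theorem filter_modEq_two_Ioo_floor_ceil (m q : ℝ) (r : ℤ) :
    (Ioo ⌊m⌋ ⌈q⌉).filter (· ≡ r [ZMOD 2])
      = (Ioo ⌊(m - r) / 2⌋ ⌈(q - r) / 2⌉).image (fun j => 2 * j + r) := by
  ext ℓ
  simp only [mem_filter, mem_Ioo, mem_image, Int.floor_lt, Int.lt_ceil]
  constructor
  · rintro ⟨⟨hmℓ, hℓq⟩, hℓr⟩
    obtain ⟨j, rfl⟩ : ∃ j, ℓ = 2 * j + r := by
      obtain ⟨j, hj⟩ := (Int.modEq_iff_dvd.1 hℓr.symm)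
      exact ⟨j, by omega⟩
    push_cast at hmℓ hℓq
    exact ⟨j, ⟨by linarith, by linarith⟩, rfl⟩
  · rintro ⟨j, ⟨hmj, hjq⟩, rfl⟩
    refine ⟨⟨by push_cast; linarith, by push_cast; linarith⟩, ?_⟩
    exact (Int.modEq_iff_dvd.2 ⟨j, by ring⟩).symm

theorem sum_filter_modEq_two_Ioo_floor_ceil {M : Type*} [AddCommMonoid M] (g : ℤ → M)
    (m q : ℝ) (r : ℤ) :
    ∑ ℓ ∈ (Ioo ⌊m⌋ ⌈q⌉).filter (· ≡ r [ZMOD 2]), g ℓ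
      = ∑ k ∈ range (⌈(q - r) / 2⌉ - ⌊(m - r) / 2⌋ - 1).toNat,
          g (2 * (⌊(m - r) / 2⌋ + 1 + k) + r) := by
  rw [filter_modEq_two_Ioo_floor_ceil, sum_image fun i _ j _ hij => by omega,
    Int.Ioo_eq_finset_map, sum_map]
  rfl

theorem LipschitzWith.abs_sum_sub_half_mul_integral_le {f : ℝ → ℝ} {K : ℝ≥0}
    (hf : LipschitzWith K f) (hbdd : ∀ t, |f t| ≤ K) {p : ℝ} (hp : 0 < p) {y u v : ℝ} (n : ℕ)
    (hu : |y - u| ≤ 1) (hv : |y + 2 * n - v| ≤ 1) :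
    |(∑ k ∈ range n, f ((y + 2 * k + 1) / p)) - (p / 2) * ∫ t in u / p..v / p, f t|
      ≤ n * K / p + K := by
  have hscaled : ∀ {a b : ℝ}, |a - b| ≤ 1 → |a / p - b / p| ≤ p⁻¹ := fun hab => by
    rw [← sub_div, abs_div, abs_of_pos hp, ← one_div]
    gcongr
  have hgrid := hf.norm_integral_sub_midpoint_sum_le_of_abs_le hbdd (inv_nonneg.2 hp.le) n
    (hscaled hu) (v := v / p) (by convert hscaled hv using 3; ring)
  have hscale : (∑ k ∈ range n, f ((y + 2 * k + 1) / p)) - (p / 2) * ∫ t in u / p..v / p, f t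
      = -(p / 2) * ((∫ t in u / p..v / p, f t)
        - ∑ k ∈ range n, (2 * p⁻¹) • f (y / p + (2 * k + 1) * p⁻¹)) := by
    have hpts : ∀ k : ℕ, (y + 2 * k + 1) / p = y / p + (2 * k + 1) * p⁻¹ := fun k => by ring
    simp only [hpts, smul_eq_mul, ← mul_sum]
    field_simp
    ring
  calc _ = p / 2 * ‖(∫ t in u / p..v / p, f t)
        - ∑ k ∈ range n, (2 * p⁻¹) • f (y / p + (2 * k + 1) * p⁻¹)‖ := by
        rw [hscale, abs_mul, abs_neg, abs_of_pos (half_pos hp), Real.norm_eq_abs]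
    _ ≤ p / 2 * (2 * n * K * p⁻¹ ^ 2 + 2 * K * p⁻¹) := by gcongr
    _ = n * K / p + K := by field_simp

theorem abs_sum_sub_mul_integral_le {ι : Type*} (s : Finset ι) (g : ι → ℝ) {f : ℝ → ℝ} {C : ℝ}
    (hbdd : ∀ t, |f t| ≤ C) (c a b : ℝ) :
    |(∑ i ∈ s, f (g i)) - c * ∫ t in a..b, f t| ≤ #s * C + |c| * (C * |b - a|) := by
  refine (abs_sub _ _).trans (add_le_add ?_ ?_)
  · exact (abs_sum_le_sum_abs _ _).trans <| (sum_le_sum fun i _ => hbdd _).trans <| by simp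
  · rw [abs_mul]
    gcongr
    exact intervalIntegral.norm_integral_le_of_norm_le_const (f := f) fun t _ => hbdd t

theorem abs_sum_filter_modEq_two_sub_integral_le {p : ℝ} (hp : 0 < p) {m q : ℝ} (hmq : m < q)
    {f : ℝ → ℝ} {K : ℝ≥0} (hf : LipschitzWith K f) (hbdd : ∀ t, |f t| ≤ K) (r : ℤ) :
    |(∑ ℓ ∈ (Ioo ⌊m⌋ ⌈q⌉).filter (· ≡ r [ZMOD 2]), f ((ℓ : ℝ) / p))
        - (p / 2) * ∫ t in m / p..q / p, f t| ≤ K * (q - m) / p + 2 * K := by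
  rw [sum_filter_modEq_two_Ioo_floor_ceil]
  set A := ⌊(m - r) / 2⌋
  set B := ⌈(q - r) / 2⌉
  set n := (B - A - 1).toNat
  set y : ℝ := 2 * A + r + 1
  have hA : (A : ℝ) ≤ (m - r) / 2 ∧ (m - r) / 2 < A + 1 := ⟨Int.floor_le _, Int.lt_floor_add_one _⟩
  have hB : (q - r) / 2 ≤ B ∧ (B : ℝ) < (q - r) / 2 + 1 := ⟨Int.le_ceil _, Int.ceil_lt_add_one _⟩
  have hn : (n : ℝ) = B - A - 1 := by
    have hAB : A < B := by exact_mod_cast (show (A : ℝ) < B by linarith)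
    exact_mod_cast Int.toNat_of_nonneg (show 0 ≤ B - A - 1 by omega)
  have hpoints : ∀ k : ℕ, ((2 * (A + 1 + k) + r : ℤ) : ℝ) = y + 2 * k + 1 :=
    fun k => by simp only [y]; push_cast; ring
  simp only [hpoints]
  have hK : (0 : ℝ) ≤ K := K.2
  have hcount : (n : ℝ) ≤ (q - m) / 2 + 1 := by linarith
  rcases le_or_gt p 1 with hp1 | hp1
  · have hlen : |p / 2| * (K * |q / p - m / p|) = K * (q - m) / 2 := by
      rw [← sub_div, abs_of_pos (half_pos hp), abs_div, abs_of_pos hp,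
        abs_of_pos (sub_pos.2 hmq)]
      field_simp
    calc _ ≤ n * K + K * (q - m) / 2 := by
          simpa [hlen] using abs_sum_sub_mul_integral_le (range n) _ hbdd (p / 2) (m / p) (q / p)
      _ ≤ K * (q - m) / p + 2 * K := by
        have : K * (q - m) ≤ K * (q - m) / p := le_div_self (by nlinarith) hp hp1
        nlinarith
  · have hu : |y - m| ≤ 1 := abs_le.2 ⟨by linarith, by linarith⟩
    have hv : |y + 2 * n - q| ≤ 1 := abs_le.2 ⟨by linarith, by linarith⟩
    calc _ ≤ n * K / p + K := hf.abs_sum_sub_half_mul_integral_le hbdd hp n hu hv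
      _ ≤ ((q - m) / 2 + 1) * K / p + K := by gcongr
      _ = K * (q - m) / p / 2 + K / p + K := by ring
      _ ≤ K * (q - m) / p + 2 * K := by
        have : 0 ≤ K * (q - m) / p := by bound
        linarith [div_le_self hK hp1.le]

theorem integral_approx_bounded_derivative (m q p : ℝ) (hp : 0 < p)
    (hmq : m < q) (f : ℝ → ℝ) (hdiff : Differentiable ℝ f) (K : ℝ)
    (hbound : ∀ t : ℝ, |f t| + |deriv f t| ≤ K) :
    |(∑ ℓ ∈ (Finset.Ioo ⌊m⌋ ⌈q⌉).filter (fun ℓ => Even ℓ), f ((ℓ : ℝ) / p)) -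
        (p / 2) * ∫ t in (m / p)..(q / p), f t| ≤ K * (q - m) / p + 2 * K ∧
    |(∑ ℓ ∈ (Finset.Ioo ⌊m⌋ ⌈q⌉).filter (fun ℓ => Odd ℓ), f ((ℓ : ℝ) / p)) -
        (p / 2) * ∫ t in (m / p)..(q / p), f t| ≤ K * (q - m) / p + 2 * K := by
  have hK : 0 ≤ K := (add_nonneg (abs_nonneg _) (abs_nonneg _)).trans (hbound 0)
  lift K to ℝ≥0 using hK
  have hbdd : ∀ t, |f t| ≤ K := fun t => (le_add_of_nonneg_right (abs_nonneg _)).trans (hbound t)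
  have hf : LipschitzWith K f := lipschitzWith_of_nnnorm_deriv_le hdiff fun t => by
    rw [← NNReal.coe_le_coe, coe_nnnorm, Real.norm_eq_abs]
    exact (le_add_of_nonneg_left (abs_nonneg _)).trans (hbound t)
  have hEven : ∀ ℓ : ℤ, Even ℓ ↔ ℓ ≡ 0 [ZMOD 2] := fun ℓ => Int.even_iff
  have hOdd : ∀ ℓ : ℤ, Odd ℓ ↔ ℓ ≡ 1 [ZMOD 2] := fun ℓ => Int.odd_iff
  simp only [hEven, hOdd]
  exact ⟨abs_sum_filter_modEq_two_sub_integral_le hp hmq hf hbdd 0,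
    abs_sum_filter_modEq_two_sub_integral_le hp hmq hf hbdd 1⟩
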